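/- arXiv:0912.1451 — 6 statements merged into one kernel-verified Lean document; each statement's English description precedes it below -/
import Mathlib

section
/- Let (X_1,…,X_n) be an orthonormal basis of a real inner product space V of dimension n = 2m with orthogonal complex structure J, and let α : V → V be a selfadjoint endomorphism commuting with J. Then in the complexified Clifford algebra, Σ_a p(α(X_a))·p̄(X_a) = Σ_a p(X_a)·p̄(α(X_a)) = -(1/2)tr(α) + (i/2) Σ_a α(X_a)·J(X_a), and Σ_a p̄(α(X_a))·p(X_a) = Σ_a p̄(X_a)·p(α(X_a)) = -(1/2)tr(α) - (i/2) Σ_a α(X_a)·J(X_a). -/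
set_option maxHeartbeats 2000000
set_option synthInstance.maxHeartbeats 200000

open scoped TensorProduct RealInnerProductSpace

theorem aux_swap {V : Type*} [NormedAddCommGroup V] [InnerProductSpace ℝ V]
    [FiniteDimensional ℝ V] {ι' : Type*} [Fintype ι'] (b : OrthonormalBasis ι' ℝ V)
    {M : Type*} [AddCommGroup M] [Module ℝ M]
    (F : V →ₗ[ℝ] V →ₗ[ℝ] M) (T : V →ₗ[ℝ] V) :
    ∑ a, F (b a) (T (b a)) = ∑ a, F (LinearMap.adjoint T (b a)) (b a) := by
  have h1 : ∀ a, F (b a) (T (b a)) = ∑ i, ⟪b i, T (b a)⟫ • F (b a) (b i) := by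
    intro a
    conv_lhs => rw [← b.sum_repr' (T (b a))]
    simp [map_sum]
  have h2 : ∀ i, F (LinearMap.adjoint T (b i)) (b i)
      = ∑ a, ⟪b a, LinearMap.adjoint T (b i)⟫ • F (b a) (b i) := by
    intro i
    conv_lhs => rw [← b.sum_repr' (LinearMap.adjoint T (b i))]
    simp [map_sum]
  simp_rw [h1, h2]
  rw [Finset.sum_comm]
  congr 1; ext i; congr 1; ext a; congr 1
  rw [LinearMap.adjoint_inner_right, real_inner_comm]

theorem aux_trace {V : Type*} [NormedAddCommGroup V] [InnerProductSpace ℝ V]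
    [FiniteDimensional ℝ V] {ι' : Type*} [Fintype ι'] [DecidableEq ι']
    (b : OrthonormalBasis ι' ℝ V) (α : V →ₗ[ℝ] V) :
    LinearMap.trace ℝ V α = ∑ a, ⟪α (b a), b a⟫ := by
  rw [LinearMap.trace_eq_matrix_trace ℝ b.toBasis, Matrix.trace]
  congr 1; ext i
  rw [Matrix.diag_apply, LinearMap.toMatrix_apply, OrthonormalBasis.coe_toBasis,
    OrthonormalBasis.coe_toBasis_repr_apply, OrthonormalBasis.repr_apply_apply,
    real_inner_comm]

/-- Lemma 1.1: for an orthonormal basis `(X_a)` of a `2m`-dimensional real inner product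
space with orthogonal complex structure `J`, and a selfadjoint endomorphism `α` commuting
with `J`, in the complexified Clifford algebra (relation `X·Y + Y·X = -2⟨X,Y⟩`):
`Σ p(α X_a)·p̄(X_a) = Σ p(X_a)·p̄(α X_a) = -(1/2)tr α + (i/2) Σ α(X_a)·J(X_a)` and
`Σ p̄(α X_a)·p(X_a) = Σ p̄(X_a)·p(α X_a) = -(1/2)tr α - (i/2) Σ α(X_a)·J(X_a)`. -/
theorem stmt2 {V : Type*} [NormedAddCommGroup V] [InnerProductSpace ℝ V]
    [FiniteDimensional ℝ V] (m : ℕ) (hdim : Module.finrank ℝ V = 2 * m)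
    (J : V →ₗ[ℝ] V) (hJ2 : ∀ x, J (J x) = -x)
    (hJiso : ∀ x y, ⟪J x, J y⟫ = ⟪x, y⟫)
    (Q : QuadraticForm ℝ V) (hQ : ∀ x, Q x = -⟪x, x⟫)
    (ι' : Type*) [Fintype ι'] (b : OrthonormalBasis ι' ℝ V)
    (α : V →ₗ[ℝ] V) (hαsym : ∀ x y, ⟪α x, y⟫ = ⟪x, α y⟫)
    (hαJ : ∀ x, α (J x) = J (α x))
    (c : V → ℂ ⊗[ℝ] CliffordAlgebra Q)
    (hc : ∀ X, c X = (1 : ℂ) ⊗ₜ[ℝ] CliffordAlgebra.ι Q X)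
    (p pbar : V → ℂ ⊗[ℝ] CliffordAlgebra Q)
    (hp : ∀ X, p X = (1/2 : ℂ) • (c X - Complex.I • c (J X)))
    (hpbar : ∀ X, pbar X = (1/2 : ℂ) • (c X + Complex.I • c (J X))) :
    (∑ a, p (α (b a)) * pbar (b a)
        = algebraMap ℂ (ℂ ⊗[ℝ] CliffordAlgebra Q)
            (-(((LinearMap.trace ℝ V) α : ℝ) : ℂ) / 2)
          + (Complex.I / 2) • ∑ a, c (α (b a)) * c (J (b a))) ∧
    (∑ a, p (b a) * pbar (α (b a))
        = algebraMap ℂ (ℂ ⊗[ℝ] CliffordAlgebra Q)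
            (-(((LinearMap.trace ℝ V) α : ℝ) : ℂ) / 2)
          + (Complex.I / 2) • ∑ a, c (α (b a)) * c (J (b a))) ∧
    (∑ a, pbar (α (b a)) * p (b a)
        = algebraMap ℂ (ℂ ⊗[ℝ] CliffordAlgebra Q)
            (-(((LinearMap.trace ℝ V) α : ℝ) : ℂ) / 2)
          - (Complex.I / 2) • ∑ a, c (α (b a)) * c (J (b a))) ∧
    (∑ a, pbar (b a) * p (α (b a))
        = algebraMap ℂ (ℂ ⊗[ℝ] CliffordAlgebra Q)
            (-(((LinearMap.trace ℝ V) α : ℝ) : ℂ) / 2)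
          - (Complex.I / 2) • ∑ a, c (α (b a)) * c (J (b a))) := by
  classical
  -- c as a linear map
  set cL : V →ₗ[ℝ] ℂ ⊗[ℝ] CliffordAlgebra Q :=
    (Algebra.TensorProduct.includeRight (R := ℝ) (A := ℂ)).toLinearMap.comp
      (CliffordAlgebra.ι Q) with hcLdef
  have hcL : ∀ x, c x = cL x := by
    intro x
    simp [hc, hcLdef, Algebra.TensorProduct.includeRight_apply]
  -- bilinear multiplication map
  set G : V →ₗ[ℝ] V →ₗ[ℝ] ℂ ⊗[ℝ] CliffordAlgebra Q := (LinearMap.mul ℝ (ℂ ⊗[ℝ] CliffordAlgebra Q)).compl₁₂ cL cL with hGdef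
  have hG : ∀ x y, G x y = c x * c y := by
    intro x y
    simp [hGdef, hcL, LinearMap.compl₁₂_apply, LinearMap.mul_apply']
  -- adjoint facts
  have hadjα : LinearMap.adjoint α = α :=
    ((LinearMap.eq_adjoint_iff α α).mpr hαsym).symm
  have hadjJ : LinearMap.adjoint J = -J := by
    refine ((LinearMap.eq_adjoint_iff (-J) J).mpr ?_).symm
    intro x y
    have h := hJiso x (J y)
    rw [hJ2] at h
    simp only [LinearMap.neg_apply, inner_neg_left]
    rw [← h]
    simp [inner_neg_right]
  -- the move lemma
  have hmove : ∀ A B : V →ₗ[ℝ] V,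
      ∑ a, c (A (b a)) * c (B (b a))
        = ∑ a, c (A (LinearMap.adjoint B (b a))) * c (b a) := by
    intro A B
    have := aux_swap b (G.compl₁₂ A LinearMap.id) B
    simpa only [LinearMap.compl₁₂_apply, LinearMap.id_apply, hG] using this
  -- anticommutation
  have hanti : ∀ x y : V, c x * c y + c y * c x
      = algebraMap ℂ (ℂ ⊗[ℝ] CliffordAlgebra Q) (((-2 * ⟪x, y⟫ : ℝ) : ℂ)) := by
    intro x y
    have hpol : QuadraticMap.polar Q x y = -2 * ⟪x, y⟫ := by
      rw [QuadraticMap.polar, hQ, hQ, hQ, real_inner_add_add_self]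
      ring
    rw [hc, hc, Algebra.TensorProduct.tmul_mul_tmul, Algebra.TensorProduct.tmul_mul_tmul,
      mul_one, ← TensorProduct.tmul_add, CliffordAlgebra.ι_mul_ι_add_swap, hpol]
    rw [Algebra.TensorProduct.algebraMap_apply]
    simp only [Algebra.algebraMap_self, RingHom.id_apply]
    rw [show ((((-2 * ⟪x, y⟫ : ℝ)) : ℂ)) = (-2 * ⟪x, y⟫ : ℝ) • (1 : ℂ) by
      simp [Algebra.algebraMap_eq_smul_one]]
    rw [TensorProduct.smul_tmul, Algebra.algebraMap_eq_smul_one]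
  have hsmulalg : ∀ z w : ℂ, z • algebraMap ℂ (ℂ ⊗[ℝ] CliffordAlgebra Q) w
      = algebraMap ℂ (ℂ ⊗[ℝ] CliffordAlgebra Q) (z * w) := by
    intro z w
    rw [Algebra.TensorProduct.algebraMap_apply, Algebra.TensorProduct.algebraMap_apply]
    simp only [Algebra.algebraMap_self, RingHom.id_apply]
    rw [TensorProduct.smul_tmul', smul_eq_mul]
  -- trace
  have htr : LinearMap.trace ℝ V α = ∑ a, ⟪α (b a), b a⟫ := aux_trace b α
  set tr : ℂ := (((LinearMap.trace ℝ V) α : ℝ) : ℂ) with htrdef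
  -- E : the diagonal sum
  have hE : ∑ a, c (α (b a)) * c (b a) = algebraMap ℂ (ℂ ⊗[ℝ] CliffordAlgebra Q) (-tr) := by
    have h2 : ∑ a, c (b a) * c (α (b a)) = ∑ a, c (α (b a)) * c (b a) := by
      have := hmove LinearMap.id α
      simpa [hadjα] using this
    have h3 : (∑ a, c (α (b a)) * c (b a)) + ∑ a, c (b a) * c (α (b a))
        = algebraMap ℂ (ℂ ⊗[ℝ] CliffordAlgebra Q) (-2 * tr) := by
      rw [← Finset.sum_add_distrib]
      simp_rw [hanti]
      rw [← map_sum]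
      congr 1
      rw [htrdef, htr]
      push_cast
      rw [Finset.mul_sum]
    rw [h2, ← two_smul ℂ] at h3
    calc ∑ a, c (α (b a)) * c (b a)
        = ((1:ℂ)/2) • ((2:ℂ) • ∑ a, c (α (b a)) * c (b a)) := by
          rw [smul_smul]; norm_num
      _ = ((1:ℂ)/2) • algebraMap ℂ (ℂ ⊗[ℝ] CliffordAlgebra Q) (-2 * tr) := by rw [h3]
      _ = algebraMap ℂ (ℂ ⊗[ℝ] CliffordAlgebra Q) (-tr) := by
          rw [hsmulalg]
          congr 1
          ring
  have hE2 : ∑ a, c (b a) * c (α (b a)) = algebraMap ℂ (ℂ ⊗[ℝ] CliffordAlgebra Q) (-tr) := by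
    have := hmove LinearMap.id α
    simpa [hadjα, hE] using this
  -- vector simplification: J (α (-(J x))) = α x
  have hvec : ∀ x : V, J (α (-(J x))) = α x := by
    intro x
    simp [map_neg, hαJ, hJ2]
  have hE3 : ∑ a, c (J (α (b a))) * c (J (b a)) = algebraMap ℂ (ℂ ⊗[ℝ] CliffordAlgebra Q) (-tr) := by
    have := hmove (J ∘ₗ α) J
    rw [hadjJ] at this
    simp only [LinearMap.comp_apply, LinearMap.neg_apply, hvec] at this
    rw [this, hE]
  have hE4 : ∑ a, c (J (b a)) * c (J (α (b a))) = algebraMap ℂ (ℂ ⊗[ℝ] CliffordAlgebra Q) (-tr) := by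
    have := hmove J (J ∘ₗ α)
    rw [LinearMap.adjoint_comp, hadjα, hadjJ] at this
    simp only [LinearMap.comp_apply, LinearMap.neg_apply, hvec] at this
    rw [this, hE]
  set S : ℂ ⊗[ℝ] CliffordAlgebra Q := ∑ a, c (α (b a)) * c (J (b a)) with hSdef
  have hneg : ∀ x : V, c (-x) = -c x := by
    intro x; simp [hcL]
  have hS2 : ∑ a, c (J (α (b a))) * c (b a) = -S := by
    have h := hmove α J
    rw [hadjJ] at h
    have h' : ∀ a : ι', c (α ((-J : V →ₗ[ℝ] V) (b a))) * c (b a)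
        = -(c (J (α (b a))) * c (b a)) := by
      intro a
      rw [LinearMap.neg_apply, map_neg, hαJ, hneg]
      exact neg_mul (c (J (α (b a)))) (c (b a))
    simp_rw [h'] at h
    rw [Finset.sum_neg_distrib] at h
    rw [hSdef, h, neg_neg]
  have hS3 : ∑ a, c (b a) * c (J (α (b a))) = S := by
    have h := hmove (LinearMap.id : V →ₗ[ℝ] V) (J ∘ₗ α)
    rw [LinearMap.adjoint_comp, hadjα, hadjJ] at h
    have h' : ∀ a : ι', c ((LinearMap.id : V →ₗ[ℝ] V) ((α ∘ₗ (-J : V →ₗ[ℝ] V)) (b a))) * c (b a)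
        = -(c (J (α (b a))) * c (b a)) := by
      intro a
      rw [LinearMap.id_apply, LinearMap.comp_apply, LinearMap.neg_apply, map_neg, hαJ, hneg]
      exact neg_mul (c (J (α (b a)))) (c (b a))
    simp_rw [h'] at h
    rw [Finset.sum_neg_distrib, hS2, neg_neg] at h
    exact h
  have hS4 : ∑ a, c (J (b a)) * c (α (b a)) = -S := by
    have := hmove J α
    rw [hadjα] at this
    rw [this, hS2]
  -- scalar fact
  have hhalf : algebraMap ℂ (ℂ ⊗[ℝ] CliffordAlgebra Q) (-tr / 2) = ((1:ℂ)/2) • algebraMap ℂ (ℂ ⊗[ℝ] CliffordAlgebra Q) (-tr) := by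
    rw [hsmulalg]
    congr 1
    ring
  -- per-term expansions
  have hterm1 : ∀ x : V, p (α x) * pbar x
      = ((1:ℂ)/4) • (c (α x) * c x) + (Complex.I/4) • (c (α x) * c (J x))
        - (Complex.I/4) • (c (J (α x)) * c x) + ((1:ℂ)/4) • (c (J (α x)) * c (J x)) := by
    intro x
    rw [hp, hpbar]
    simp only [smul_sub, smul_add, sub_mul, add_mul, mul_add, mul_sub, smul_mul_assoc,
      mul_smul_comm, smul_smul]
    match_scalars <;> ring_nf <;> simp [Complex.I_sq] <;> norm_num
  have hterm2 : ∀ x : V, p x * pbar (α x)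
      = ((1:ℂ)/4) • (c x * c (α x)) + (Complex.I/4) • (c x * c (J (α x)))
        - (Complex.I/4) • (c (J x) * c (α x)) + ((1:ℂ)/4) • (c (J x) * c (J (α x))) := by
    intro x
    rw [hp, hpbar]
    simp only [smul_sub, smul_add, sub_mul, add_mul, mul_add, mul_sub, smul_mul_assoc,
      mul_smul_comm, smul_smul]
    match_scalars <;> ring_nf <;> simp [Complex.I_sq] <;> norm_num
  have hterm3 : ∀ x : V, pbar (α x) * p x
      = ((1:ℂ)/4) • (c (α x) * c x) - (Complex.I/4) • (c (α x) * c (J x))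
        + (Complex.I/4) • (c (J (α x)) * c x) + ((1:ℂ)/4) • (c (J (α x)) * c (J x)) := by
    intro x
    rw [hp, hpbar]
    simp only [smul_sub, smul_add, sub_mul, add_mul, mul_add, mul_sub, smul_mul_assoc,
      mul_smul_comm, smul_smul]
    match_scalars <;> ring_nf <;> simp [Complex.I_sq] <;> norm_num
  have hterm4 : ∀ x : V, pbar x * p (α x)
      = ((1:ℂ)/4) • (c x * c (α x)) - (Complex.I/4) • (c x * c (J (α x)))
        + (Complex.I/4) • (c (J x) * c (α x)) + ((1:ℂ)/4) • (c (J x) * c (J (α x))) := by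
    intro x
    rw [hp, hpbar]
    simp only [smul_sub, smul_add, sub_mul, add_mul, mul_add, mul_sub, smul_mul_assoc,
      mul_smul_comm, smul_smul]
    match_scalars <;> ring_nf <;> simp [Complex.I_sq] <;> norm_num
  refine ⟨?_, ?_, ?_, ?_⟩
  · calc ∑ a, p (α (b a)) * pbar (b a)
        = ((1:ℂ)/4) • (∑ a, c (α (b a)) * c (b a))
            + (Complex.I/4) • (∑ a, c (α (b a)) * c (J (b a)))
            - (Complex.I/4) • (∑ a, c (J (α (b a))) * c (b a))
            + ((1:ℂ)/4) • (∑ a, c (J (α (b a))) * c (J (b a))) := by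
          simp_rw [hterm1]
          rw [Finset.sum_add_distrib, Finset.sum_sub_distrib, Finset.sum_add_distrib,
            Finset.smul_sum, Finset.smul_sum, Finset.smul_sum, Finset.smul_sum]
      _ = algebraMap ℂ (ℂ ⊗[ℝ] CliffordAlgebra Q) (-tr / 2) + (Complex.I / 2) • S := by
          rw [hE, hE3, hS2, ← hSdef, hhalf]
          module
  · calc ∑ a, p (b a) * pbar (α (b a))
        = ((1:ℂ)/4) • (∑ a, c (b a) * c (α (b a)))
            + (Complex.I/4) • (∑ a, c (b a) * c (J (α (b a))))
            - (Complex.I/4) • (∑ a, c (J (b a)) * c (α (b a)))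
            + ((1:ℂ)/4) • (∑ a, c (J (b a)) * c (J (α (b a)))) := by
          simp_rw [hterm2]
          rw [Finset.sum_add_distrib, Finset.sum_sub_distrib, Finset.sum_add_distrib,
            Finset.smul_sum, Finset.smul_sum, Finset.smul_sum, Finset.smul_sum]
      _ = algebraMap ℂ (ℂ ⊗[ℝ] CliffordAlgebra Q) (-tr / 2) + (Complex.I / 2) • S := by
          rw [hE2, hE4, hS3, hS4, hhalf]
          module
  · calc ∑ a, pbar (α (b a)) * p (b a)
        = ((1:ℂ)/4) • (∑ a, c (α (b a)) * c (b a))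
            - (Complex.I/4) • (∑ a, c (α (b a)) * c (J (b a)))
            + (Complex.I/4) • (∑ a, c (J (α (b a))) * c (b a))
            + ((1:ℂ)/4) • (∑ a, c (J (α (b a))) * c (J (b a))) := by
          simp_rw [hterm3]
          rw [Finset.sum_add_distrib, Finset.sum_add_distrib, Finset.sum_sub_distrib,
            Finset.smul_sum, Finset.smul_sum, Finset.smul_sum, Finset.smul_sum]
      _ = algebraMap ℂ (ℂ ⊗[ℝ] CliffordAlgebra Q) (-tr / 2) - (Complex.I / 2) • S := by
          rw [hE, hE3, hS2, ← hSdef, hhalf]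
          module
  · calc ∑ a, pbar (b a) * p (α (b a))
        = ((1:ℂ)/4) • (∑ a, c (b a) * c (α (b a)))
            - (Complex.I/4) • (∑ a, c (b a) * c (J (α (b a))))
            + (Complex.I/4) • (∑ a, c (J (b a)) * c (α (b a)))
            + ((1:ℂ)/4) • (∑ a, c (J (b a)) * c (J (α (b a)))) := by
          simp_rw [hterm4]
          rw [Finset.sum_add_distrib, Finset.sum_add_distrib, Finset.sum_sub_distrib,
            Finset.smul_sum, Finset.smul_sum, Finset.smul_sum, Finset.smul_sum]
      _ = algebraMap ℂ (ℂ ⊗[ℝ] CliffordAlgebra Q) (-tr / 2) - (Complex.I / 2) • S := by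
          rw [hE2, hE4, hS3, hS4, hhalf]
          module
end

section
/- With the setup of the previous lemma applied to α = id: Σ_a p(X_a)·p̄(X_a) = -m + iΩ and Σ_a p̄(X_a)·p(X_a) = -m - iΩ, where Ω := (1/2) Σ_a X_a·J(X_a) is the Kähler form element of the complexified Clifford algebra. -/
open scoped TensorProduct RealInnerProductSpace

set_option maxHeartbeats 1000000 in
set_option synthInstance.maxHeartbeats 100000 in
/-- Specializing Lemma 1.1 to `α = id`: with `Ω := (1/2) Σ X_a·J(X_a)` the Kähler form
element of the complexified Clifford algebra, one has
`Σ p(X_a)·p̄(X_a) = -m + iΩ` and `Σ p̄(X_a)·p(X_a) = -m - iΩ`. -/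
theorem stmt3 {V : Type*} [NormedAddCommGroup V] [InnerProductSpace ℝ V]
    [FiniteDimensional ℝ V] (m : ℕ) (hdim : Module.finrank ℝ V = 2 * m)
    (J : V →ₗ[ℝ] V) (hJ2 : ∀ x, J (J x) = -x)
    (hJiso : ∀ x y, ⟪J x, J y⟫ = ⟪x, y⟫)
    (Q : QuadraticForm ℝ V) (hQ : ∀ x, Q x = -⟪x, x⟫)
    (ι' : Type*) [Fintype ι'] (b : OrthonormalBasis ι' ℝ V)
    (c : V → ℂ ⊗[ℝ] CliffordAlgebra Q)
    (hc : ∀ X, c X = (1 : ℂ) ⊗ₜ[ℝ] CliffordAlgebra.ι Q X)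
    (p pbar : V → ℂ ⊗[ℝ] CliffordAlgebra Q)
    (hp : ∀ X, p X = (1/2 : ℂ) • (c X - Complex.I • c (J X)))
    (hpbar : ∀ X, pbar X = (1/2 : ℂ) • (c X + Complex.I • c (J X)))
    (Ω : ℂ ⊗[ℝ] CliffordAlgebra Q)
    (hΩ : Ω = (1/2 : ℂ) • ∑ a, c (b a) * c (J (b a))) :
    (∑ a, p (b a) * pbar (b a)
        = algebraMap ℂ (ℂ ⊗[ℝ] CliffordAlgebra Q) (-(m : ℂ)) + Complex.I • Ω) ∧
    (∑ a, pbar (b a) * p (b a)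
        = algebraMap ℂ (ℂ ⊗[ℝ] CliffordAlgebra Q) (-(m : ℂ)) - Complex.I • Ω) := by
  classical
  have hcard : Fintype.card ι' = 2 * m := by
    rw [← hdim, Module.finrank_eq_card_basis b.toBasis]
  -- real scalars embed
  have hemb : ∀ r : ℝ, (1 : ℂ) ⊗ₜ[ℝ] (algebraMap ℝ (CliffordAlgebra Q) r)
      = algebraMap ℂ (ℂ ⊗[ℝ] CliffordAlgebra Q) ((r : ℂ)) := by
    intro r
    rw [Algebra.algebraMap_eq_smul_one, ← TensorProduct.smul_tmul,
      Algebra.TensorProduct.algebraMap_apply]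
    norm_num [Complex.real_smul]
  have hmul : ∀ x y : V, c x * c y + c y * c x
      = algebraMap ℂ (ℂ ⊗[ℝ] CliffordAlgebra Q) ((((-2 : ℝ) * ⟪x, y⟫ : ℝ) : ℂ)) := by
    intro x y
    have hpol : QuadraticMap.polar Q x y = (-2 : ℝ) * ⟪x, y⟫ := by
      simp only [QuadraticMap.polar, hQ, real_inner_add_add_self]
      ring
    rw [hc, hc, Algebra.TensorProduct.tmul_mul_tmul, Algebra.TensorProduct.tmul_mul_tmul,
      one_mul, ← TensorProduct.tmul_add, CliffordAlgebra.ι_mul_ι_add_swap, hpol, hemb]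
  have hsq : ∀ x : V, c x * c x
      = algebraMap ℂ (ℂ ⊗[ℝ] CliffordAlgebra Q) (((-⟪x, x⟫ : ℝ) : ℂ)) := by
    intro x
    rw [hc, Algebra.TensorProduct.tmul_mul_tmul, one_mul, CliffordAlgebra.ι_sq_scalar,
      hQ, hemb]
  have hJperp : ∀ x : V, ⟪x, J x⟫ = 0 := by
    intro x
    have h1 : ⟪J x, J (J x)⟫ = ⟪x, J x⟫ := hJiso x (J x)
    rw [hJ2, inner_neg_right] at h1
    have h2 : ⟪J x, x⟫ = ⟪x, J x⟫ := real_inner_comm _ _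
    linarith
  have hanti : ∀ x : V, c (J x) * c x = -(c x * c (J x)) := by
    intro x
    have h := hmul x (J x)
    rw [hJperp x] at h
    simp only [mul_zero, Complex.ofReal_zero, map_zero] at h
    rw [add_comm] at h
    exact eq_neg_of_add_eq_zero_left h
  have hbnorm : ∀ a : ι', ⟪b a, b a⟫ = 1 := fun a => by
    rw [real_inner_self_eq_norm_mul_norm, b.orthonormal.1 a]; norm_num
  have hsq1 : ∀ a : ι', c (b a) * c (b a)
      = algebraMap ℂ (ℂ ⊗[ℝ] CliffordAlgebra Q) (-1) := fun a => by
    rw [hsq, hbnorm]; norm_num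
  have hsq2 : ∀ a : ι', c (J (b a)) * c (J (b a))
      = algebraMap ℂ (ℂ ⊗[ℝ] CliffordAlgebra Q) (-1) := fun a => by
    rw [hsq, hJiso, hbnorm]; norm_num
  have expand : ∀ u v : ℂ ⊗[ℝ] CliffordAlgebra Q,
      u * u = algebraMap ℂ (ℂ ⊗[ℝ] CliffordAlgebra Q) (-1) →
      v * v = algebraMap ℂ (ℂ ⊗[ℝ] CliffordAlgebra Q) (-1) →
      v * u = -(u * v) →
      ((1/2 : ℂ) • (u - Complex.I • v)) * ((1/2 : ℂ) • (u + Complex.I • v))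
        = algebraMap ℂ (ℂ ⊗[ℝ] CliffordAlgebra Q) (-(1/2 : ℂ))
          + (Complex.I / 2) • (u * v) ∧
      ((1/2 : ℂ) • (u + Complex.I • v)) * ((1/2 : ℂ) • (u - Complex.I • v))
        = algebraMap ℂ (ℂ ⊗[ℝ] CliffordAlgebra Q) (-(1/2 : ℂ))
          - (Complex.I / 2) • (u * v) := by
    intro u v hu hv hvu
    constructor
    · rw [smul_mul_assoc, mul_smul_comm, smul_smul, sub_mul, mul_add, mul_add,
        smul_mul_assoc, smul_mul_assoc, mul_smul_comm, mul_smul_comm, smul_smul,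
        Complex.I_mul_I, hu, hv, hvu, smul_neg]
      simp only [Algebra.algebraMap_eq_smul_one]
      module
    · rw [smul_mul_assoc, mul_smul_comm, smul_smul, add_mul, mul_sub, mul_sub,
        smul_mul_assoc, smul_mul_assoc, mul_smul_comm, mul_smul_comm, smul_smul,
        Complex.I_mul_I, hu, hv, hvu, smul_neg]
      simp only [Algebra.algebraMap_eq_smul_one]
      module
  have key1 : ∀ a : ι', p (b a) * pbar (b a)
      = algebraMap ℂ (ℂ ⊗[ℝ] CliffordAlgebra Q) (-(1/2 : ℂ))
        + (Complex.I / 2) • (c (b a) * c (J (b a))) := by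
    intro a
    rw [hp, hpbar]
    exact (expand _ _ (hsq1 a) (hsq2 a) (hanti (b a))).1
  have key2 : ∀ a : ι', pbar (b a) * p (b a)
      = algebraMap ℂ (ℂ ⊗[ℝ] CliffordAlgebra Q) (-(1/2 : ℂ))
        - (Complex.I / 2) • (c (b a) * c (J (b a))) := by
    intro a
    rw [hp, hpbar]
    exact (expand _ _ (hsq1 a) (hsq2 a) (hanti (b a))).2
  have hconst : ∑ _a : ι', algebraMap ℂ (ℂ ⊗[ℝ] CliffordAlgebra Q) (-(1/2 : ℂ))
      = algebraMap ℂ (ℂ ⊗[ℝ] CliffordAlgebra Q) (-(m : ℂ)) := by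
    rw [Finset.sum_const, Finset.card_univ, hcard,
      show (-(m : ℂ)) = (2 * m) • (-(1/2 : ℂ)) by push_cast [nsmul_eq_mul]; ring,
      map_nsmul]
  have hOmega : (Complex.I / 2) • ∑ a, c (b a) * c (J (b a)) = Complex.I • Ω := by
    rw [hΩ, smul_smul]
    congr 1
    ring
  constructor
  · rw [Finset.sum_congr rfl (fun a _ => key1 a), Finset.sum_add_distrib, hconst,
      ← Finset.smul_sum, hOmega]
  · rw [Finset.sum_congr rfl (fun a _ => key2 a), Finset.sum_sub_distrib, hconst,
      ← Finset.smul_sum, hOmega]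
end

section
/- In the setting of the previous statement, for each k ∈ {1,…,m} define e_k ψ := (1/λ)(D₋ψ_k + D₊ψ_{k-1}) for ψ in the λ-eigenspace E^λ of D. Then D(e_k ψ) = λ·(e_k ψ), i.e., e_k maps E^λ into itself. -/
/-- Lemma 1.2: in the graded setting, for an eigenspinor `ψ` of `D = D₊ + D₋` with
eigenvalue `λ ≠ 0`, the spinor `e_k ψ := λ⁻¹(D₋ψ_k + D₊ψ_{k-1})` again satisfies
`D(e_k ψ) = λ·(e_k ψ)`, for each `k ∈ {1,…,m}`. -/
theorem stmt6 {H : Type*} [AddCommGroup H] [Module ℂ H] (m : ℕ)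
    (S : ℤ → Submodule ℂ H)
    (hSzero : ∀ k : ℤ, (k < 0 ∨ (m : ℤ) < k) → S k = ⊥)
    (hSindep : iSupIndep S) (hStop : (⨆ k, S k) = ⊤)
    (Dp Dm : H →ₗ[ℂ] H)
    (hDp : ∀ k : ℤ, (S k).map Dp ≤ S (k + 1))
    (hDm : ∀ k : ℤ, (S k).map Dm ≤ S (k - 1))
    (hp2 : Dp ∘ₗ Dp = 0) (hm2 : Dm ∘ₗ Dm = 0)
    (lam : ℂ) (hlam : lam ≠ 0)
    (ψ : ℤ → H) (hψmem : ∀ k, ψ k ∈ S k)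
    (heig : ∀ k : ℤ, Dp (ψ (k - 1)) + Dm (ψ (k + 1)) = lam • ψ k)
    (e : ℤ → H) (he : ∀ k : ℤ, e k = lam⁻¹ • (Dm (ψ k) + Dp (ψ (k - 1)))) :
    ∀ k : ℤ, 1 ≤ k → k ≤ (m : ℤ) →
      Dp (e k) + Dm (e k) = lam • e k := by
  intro k _ _
  have hpp : ∀ x, Dp (Dp x) = 0 := fun x => LinearMap.congr_fun hp2 x
  have hmm : ∀ x, Dm (Dm x) = 0 := fun x => LinearMap.congr_fun hm2 x
  have h1 : Dm (Dp (ψ (k - 1))) = lam • Dm (ψ k) := by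
    have := congrArg Dm (heig k)
    rwa [map_add, map_smul, hmm, add_zero] at this
  have h2 : Dp (Dm (ψ k)) = lam • Dp (ψ (k - 1)) := by
    have := congrArg Dp (heig (k - 1))
    rw [map_add, map_smul, hpp, zero_add] at this
    simpa using this
  rw [he k, map_smul, map_smul, map_add, map_add, hpp, hmm, add_zero, zero_add, h1, h2]
  simp [smul_smul, inv_mul_cancel₀ hlam, mul_inv_cancel₀ hlam, smul_add, add_comm]
end

section
/- In the same setting, the operators e_k : E^λ → E^λ (k = 1,…,m) satisfy: (i) e_k² = e_k; (ii) e_k ∘ e_l = 0 for k ≠ l; (iii) e_1 + e_2 + ⋯ + e_m = id on E^λ. Consequently E^λ decomposes as the direct sum of the images E^λ_k := e_k(E^λ). -/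
/-- Lemma 1.3: with `π_k` the graded projections, `e_k ψ := λ⁻¹(D₋π_kψ + D₊π_{k-1}ψ)`,
on the `λ`-eigenspace of `D = D₊ + D₋` (`λ ≠ 0`) the operators `e_k` (k = 1,…,m) are
idempotent, mutually annihilating, and sum to the identity. -/
theorem stmt7 {H : Type*} [AddCommGroup H] [Module ℂ H] (m : ℕ)
    (S : ℤ → Submodule ℂ H) [DirectSum.Decomposition S]
    (hSzero : ∀ k : ℤ, (k < 0 ∨ (m : ℤ) < k) → S k = ⊥)
    (Dp Dm : H →ₗ[ℂ] H)
    (hDp : ∀ k : ℤ, (S k).map Dp ≤ S (k + 1))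
    (hDm : ∀ k : ℤ, (S k).map Dm ≤ S (k - 1))
    (hp2 : Dp ∘ₗ Dp = 0) (hm2 : Dm ∘ₗ Dm = 0)
    (lam : ℂ) (hlam : lam ≠ 0)
    (π : ℤ → H → H) (hπ : ∀ k φ, π k φ = ((DirectSum.decompose S φ) k : H))
    (e : ℤ → H → H)
    (he : ∀ k φ, e k φ = lam⁻¹ • (Dm (π k φ) + Dp (π (k - 1) φ)))
    (ψ : H) (hψ : Dp ψ + Dm ψ = lam • ψ) :
    (∀ k : ℤ, 1 ≤ k → k ≤ (m : ℤ) → e k (e k ψ) = e k ψ) ∧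
    (∀ k l : ℤ, 1 ≤ k → k ≤ (m : ℤ) → 1 ≤ l → l ≤ (m : ℤ) → k ≠ l →
      e k (e l ψ) = 0) ∧
    (∑ k ∈ Finset.Icc (1 : ℤ) (m : ℤ), e k ψ) = ψ := by
  classical
  have hpp : ∀ x : H, Dp (Dp x) = 0 := fun x => congrFun (congrArg (↑·) hp2) x
  have hmm : ∀ x : H, Dm (Dm x) = 0 := fun x => congrFun (congrArg (↑·) hm2) x
  have hπ_same : ∀ (j : ℤ) (x : H), x ∈ S j → π j x = x := by
    intro j x hx; rw [hπ]; exact DirectSum.decompose_of_mem_same S hx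
  have hπ_ne : ∀ (j k : ℤ) (x : H), x ∈ S j → k ≠ j → π k x = 0 := by
    intro j k x hx hne; rw [hπ]
    exact DirectSum.decompose_of_mem_ne S hx (Ne.symm hne)
  have hπ_add : ∀ (k : ℤ) (a b : H), π k (a + b) = π k a + π k b := by
    intro k a b; simp [hπ]
  have hπ_smul : ∀ (k : ℤ) (r : ℂ) (a : H), π k (r • a) = r • π k a := by
    intro k r a
    simp only [hπ, DirectSum.decompose_smul, DirectSum.smul_apply, Submodule.coe_smul]
  set c : ℤ → H := fun k => π k ψ with hc
  have hcmem : ∀ k, c k ∈ S k := by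
    intro k; simp only [hc, hπ]; exact (DirectSum.decompose S ψ k).2
  have hczero : ∀ k : ℤ, (k < 0 ∨ (m : ℤ) < k) → c k = 0 := by
    intro k hk
    have h := hcmem k
    rw [hSzero k hk] at h
    simpa using h
  have hmemDp : ∀ j, Dp (c j) ∈ S (j + 1) := fun j => hDp j ⟨c j, hcmem j, rfl⟩
  have hmemDm : ∀ j, Dm (c j) ∈ S (j - 1) := fun j => hDm j ⟨c j, hcmem j, rfl⟩
  -- ψ is the sum of its components
  have hsum : ∑ k ∈ Finset.Icc (0 : ℤ) (m : ℤ), c k = ψ := by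
    have h1 := DirectSum.sum_support_decompose S ψ
    rw [← h1]
    simp only [hc, hπ]
    refine (Finset.sum_subset ?_ ?_).symm
    · intro i hi
      rw [Finset.mem_Icc]
      by_contra hcon
      have h0 : c i = 0 := hczero i (by omega)
      simp only [hc, hπ] at h0
      have : (DirectSum.decompose S ψ) i = 0 := by
        ext
        simpa using h0
      simp [DFinsupp.mem_support_iff, this] at hi
    · intro i _ hi
      rw [DFinsupp.notMem_support_iff] at hi
      simp [hi]
  -- π of a finite sum
  have hπ_sum : ∀ (k : ℤ) (s : Finset ℤ) (f : ℤ → H),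
      π k (∑ j ∈ s, f j) = ∑ j ∈ s, π k (f j) := by
    intro k s f
    exact map_sum (AddMonoidHom.mk' (π k) (hπ_add k)) f s
  -- the key eigencomponent relation
  have hD : ∀ k : ℤ, lam • c k = Dp (c (k - 1)) + Dm (c (k + 1)) := by
    intro k
    have h2 : π k (Dp ψ + Dm ψ) = lam • c k := by rw [hψ, hπ_smul]
    have hDpψ : Dp ψ = ∑ j ∈ Finset.Icc (0 : ℤ) (m : ℤ), Dp (c j) := by
      conv_lhs => rw [← hsum, map_sum]
    have hDmψ : Dm ψ = ∑ j ∈ Finset.Icc (0 : ℤ) (m : ℤ), Dm (c j) := by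
      conv_lhs => rw [← hsum, map_sum]
    have hA : π k (Dp ψ) = Dp (c (k - 1)) := by
      rw [hDpψ, hπ_sum]
      rw [Finset.sum_congr rfl (fun j _ => show π k (Dp (c j)) = if j = k - 1 then Dp (c (k-1)) else 0 by
        by_cases h : j = k - 1
        · rw [if_pos h, h]
          exact hπ_same k _ (by simpa using hmemDp (k - 1))
        · rw [if_neg h]
          exact hπ_ne (j + 1) k _ (hmemDp j) (by omega))]
      rw [Finset.sum_ite_eq' (Finset.Icc (0 : ℤ) (m : ℤ)) (k - 1)]
      by_cases h : (k - 1) ∈ Finset.Icc (0 : ℤ) (m : ℤ)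
      · rw [if_pos h]
      · rw [if_neg h, hczero (k - 1) (by rw [Finset.mem_Icc] at h; omega), map_zero]
    have hB : π k (Dm ψ) = Dm (c (k + 1)) := by
      rw [hDmψ, hπ_sum]
      rw [Finset.sum_congr rfl (fun j _ => show π k (Dm (c j)) = if j = k + 1 then Dm (c (k+1)) else 0 by
        by_cases h : j = k + 1
        · rw [if_pos h, h]
          exact hπ_same k _ (by simpa using hmemDm (k + 1))
        · rw [if_neg h]
          exact hπ_ne (j - 1) k _ (hmemDm j) (by omega))]
      rw [Finset.sum_ite_eq' (Finset.Icc (0 : ℤ) (m : ℤ)) (k + 1)]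
      by_cases h : (k + 1) ∈ Finset.Icc (0 : ℤ) (m : ℤ)
      · rw [if_pos h]
      · rw [if_neg h, hczero (k + 1) (by rw [Finset.mem_Icc] at h; omega), map_zero]
    rw [← h2, hπ_add, hA, hB]
  -- e l ψ in terms of components
  have he' : ∀ l : ℤ, e l ψ = lam⁻¹ • (Dm (c l) + Dp (c (l - 1))) := fun l => he l ψ
  -- π of e l ψ
  have hπe : ∀ k l : ℤ, π k (e l ψ) =
      lam⁻¹ • ((if k = l - 1 then Dm (c l) else 0) + (if k = l then Dp (c (l - 1)) else 0)) := by
    intro k l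
    rw [he', hπ_smul, hπ_add]
    congr 2
    · by_cases h : k = l - 1
      · rw [if_pos h, h]; exact hπ_same _ _ (hmemDm l)
      · rw [if_neg h]; exact hπ_ne (l - 1) k _ (hmemDm l) h
    · by_cases h : k = l
      · rw [if_pos h, h]; exact hπ_same _ _ (by simpa using hmemDp (l - 1))
      · rw [if_neg h]; exact hπ_ne l k _ (by simpa using hmemDp (l - 1)) h
  have smul_cancel : ∀ x : H, lam⁻¹ • lam • x = x := by
    intro x; rw [smul_smul, inv_mul_cancel₀ hlam, one_smul]
  refine ⟨?_, ?_, ?_⟩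
  · -- idempotent
    intro k _ _
    rw [he k (e k ψ), hπe, hπe]
    rw [if_neg (by omega : ¬ k = k - 1), if_pos rfl, if_pos rfl,
      if_neg (by omega : ¬ k - 1 = k)]
    have h1 : Dm (Dp (c (k - 1))) = lam • Dm (c k) := by
      have := congrArg (Dm ·) (hD k)
      simp only [map_add, map_smul, hmm] at this
      rw [this]; simp [hmm]
    have h2 : Dp (Dm (c k)) = lam • Dp (c (k - 1)) := by
      have := congrArg (Dp ·) (hD (k - 1))
      simp only [map_add, map_smul, hpp] at this
      rw [this]; simp [hpp]
    rw [he']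
    simp only [zero_add, add_zero, map_smul, h1, h2, smul_cancel]
  · -- mutually annihilating
    intro k l _ _ _ _ hkl
    rw [he k (e l ψ), hπe, hπe]
    by_cases h1 : k = l - 1
    · rw [if_pos h1, if_neg hkl, if_neg (by omega : ¬ k - 1 = l - 1),
        if_neg (by omega : ¬ k - 1 = l)]
      simp [hmm]
    · by_cases h2 : k = l + 1
      · rw [if_neg h1, if_neg hkl, if_neg (by omega : ¬ k - 1 = l - 1),
          if_pos (by omega : k - 1 = l)]
        simp [hpp]
      · rw [if_neg h1, if_neg hkl, if_neg (by omega : ¬ k - 1 = l - 1),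
          if_neg (by omega : ¬ k - 1 = l)]
        simp
  · -- sum to identity
    have hsum1 : ∑ k ∈ Finset.Icc (1 : ℤ) (m : ℤ), Dm (c k) = Dm ψ := by
      conv_rhs => rw [← hsum, map_sum]
      apply Finset.sum_subset
      · intro i hi; rw [Finset.mem_Icc] at *; omega
      · intro i hi hni
        rw [Finset.mem_Icc] at hi; rw [Finset.mem_Icc] at hni
        have hi0 : i = 0 := by omega
        subst hi0
        have : Dm (c 0) ∈ S (0 - 1) := hmemDm 0
        rw [hSzero (0 - 1) (by omega)] at this
        simpa using this
    have hsum2 : ∑ k ∈ Finset.Icc (1 : ℤ) (m : ℤ), Dp (c (k - 1)) = Dp ψ := by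
      have hmap : Finset.Icc (1 : ℤ) (m : ℤ) =
          (Finset.Icc (0 : ℤ) ((m : ℤ) - 1)).map (addRightEmbedding 1) := by
        rw [Finset.map_add_right_Icc]; norm_num
      rw [hmap, Finset.sum_map]
      simp only [addRightEmbedding_apply, add_sub_cancel_right]
      conv_rhs => rw [← hsum, map_sum]
      apply Finset.sum_subset
      · intro i hi; rw [Finset.mem_Icc] at *; omega
      · intro i hi hni
        rw [Finset.mem_Icc] at hi; rw [Finset.mem_Icc] at hni
        have him : i = (m : ℤ) := by omega
        subst him
        have : Dp (c (m : ℤ)) ∈ S ((m : ℤ) + 1) := hmemDp (m : ℤ)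
        rw [hSzero ((m : ℤ) + 1) (by omega)] at this
        simpa using this
    calc ∑ k ∈ Finset.Icc (1 : ℤ) (m : ℤ), e k ψ
        = lam⁻¹ • ((∑ k ∈ Finset.Icc (1 : ℤ) (m : ℤ), Dm (c k)) +
            ∑ k ∈ Finset.Icc (1 : ℤ) (m : ℤ), Dp (c (k - 1))) := by
          rw [Finset.sum_congr rfl (fun k _ => he' k), ← Finset.smul_sum,
            Finset.sum_add_distrib]
      _ = ψ := by
          rw [hsum1, hsum2, add_comm (Dm ψ), hψ]
          exact smul_cancel ψ
end

section
/- In the same setting, every ψ ∈ E^λ_k = e_k(E^λ) has the form ψ = ψ_{k-1} + ψ_k with ψ_{k-1} ∈ H_{k-1}, ψ_k ∈ H_k, and these components satisfy D₊ψ_{k-1} = λψ_k, D₋ψ_k = λψ_{k-1}, D₋ψ_{k-1} = 0, D₊ψ_k = 0, and hence D²ψ_{k-1} = λ²ψ_{k-1} and D²ψ_k = λ²ψ_k. -/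
/-- Proposition 1.4: every element of `E^λ_k = e_k(E^λ)` has the form
`ψ = ψ_{k-1} + ψ_k` with components in `H_{k-1}`, `H_k` satisfying
`D₊ψ_{k-1} = λψ_k`, `D₋ψ_k = λψ_{k-1}`, `D₋ψ_{k-1} = 0`, `D₊ψ_k = 0`,
hence `D²ψ_{k-1} = λ²ψ_{k-1}` and `D²ψ_k = λ²ψ_k`. -/
theorem stmt8 {H : Type*} [AddCommGroup H] [Module ℂ H] (m : ℕ)
    (S : ℤ → Submodule ℂ H) [DirectSum.Decomposition S]
    (hSzero : ∀ k : ℤ, (k < 0 ∨ (m : ℤ) < k) → S k = ⊥)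
    (Dp Dm : H →ₗ[ℂ] H)
    (hDp : ∀ k : ℤ, (S k).map Dp ≤ S (k + 1))
    (hDm : ∀ k : ℤ, (S k).map Dm ≤ S (k - 1))
    (hp2 : Dp ∘ₗ Dp = 0) (hm2 : Dm ∘ₗ Dm = 0)
    (lam : ℂ) (hlam : lam ≠ 0)
    (π : ℤ → H → H) (hπ : ∀ k φ, π k φ = ((DirectSum.decompose S φ) k : H))
    (e : ℤ → H → H)
    (he : ∀ k φ, e k φ = lam⁻¹ • (Dm (π k φ) + Dp (π (k - 1) φ)))
    (ψ : H) (hψ : Dp ψ + Dm ψ = lam • ψ)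
    (k : ℤ) (hk1 : 1 ≤ k) (hkm : k ≤ (m : ℤ)) :
    π (k - 1) (e k ψ) ∈ S (k - 1) ∧
    π k (e k ψ) ∈ S k ∧
    e k ψ = π (k - 1) (e k ψ) + π k (e k ψ) ∧
    Dp (π (k - 1) (e k ψ)) = lam • π k (e k ψ) ∧
    Dm (π k (e k ψ)) = lam • π (k - 1) (e k ψ) ∧
    Dm (π (k - 1) (e k ψ)) = 0 ∧
    Dp (π k (e k ψ)) = 0 ∧
    (Dp + Dm) ((Dp + Dm) (π (k - 1) (e k ψ))) = (lam ^ 2) • π (k - 1) (e k ψ) ∧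
    (Dp + Dm) ((Dp + Dm) (π k (e k ψ))) = (lam ^ 2) • π k (e k ψ) := by
  classical
  -- the projections as linear maps
  set P : ℤ → H →ₗ[ℂ] H := fun j =>
    (S j).subtype ∘ₗ (DFinsupp.lapply j) ∘ₗ (DirectSum.decomposeLinearEquiv S).toLinearMap
    with hP
  have hπP : ∀ (j : ℤ) (x : H), π j x = P j x := by
    intro j x; rw [hπ]; rfl
  have hπmem : ∀ (j : ℤ) (φ : H), π j φ ∈ S j := by
    intro j φ; rw [hπ]; exact ((DirectSum.decompose S φ) j).2
  have hπsame : ∀ {j : ℤ} {x : H}, x ∈ S j → π j x = x := by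
    intro j x hx; rw [hπ]; exact DirectSum.decompose_of_mem_same S hx
  have hπne : ∀ {i j : ℤ} {x : H}, x ∈ S i → i ≠ j → π j x = 0 := by
    intro i j x hx hij; rw [hπ]; exact DirectSum.decompose_of_mem_ne S hx hij
  -- key commutation lemma
  have hkey : ∀ (T : H →ₗ[ℂ] H) (d : ℤ), (∀ i : ℤ, (S i).map T ≤ S (i + d)) →
      ∀ (j : ℤ) (φ : H), π j (T φ) = T (π (j - d) φ) := by
    intro T d hT j φ
    have hmemT : ∀ i : ℤ, T (π i φ) ∈ S (i + d) := fun i =>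
      hT i ⟨π i φ, hπmem i φ, rfl⟩
    have hφ : φ = ∑ i ∈ (DirectSum.decompose S φ).support, π i φ := by
      conv_lhs => rw [← DirectSum.sum_support_decompose S φ]
      refine Finset.sum_congr rfl fun i _ => ?_
      rw [hπ]
    rw [hπP]
    conv_lhs => rw [hφ, map_sum, map_sum]
    rw [Finset.sum_eq_single (j - d)]
    · rw [← hπP]
      have hmem := hmemT (j - d)
      rw [show j - d + d = j by ring] at hmem
      exact hπsame hmem
    · intro i _ hi
      rw [← hπP]
      refine hπne (hmemT i) ?_
      intro hc; exact hi (by omega)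
    · intro hns
      have h0 : π (j - d) φ = 0 := by
        rw [hπ]
        rw [DFinsupp.notMem_support_iff] at hns
        rw [hns]; rfl
      rw [h0, map_zero, map_zero]
  have hkeyp : ∀ (j : ℤ) (φ : H), π j (Dp φ) = Dp (π (j - 1) φ) :=
    hkey Dp 1 hDp
  have hkeym : ∀ (j : ℤ) (φ : H), π j (Dm φ) = Dm (π (j + 1) φ) := by
    intro j φ
    have h := hkey Dm (-1) (by intro i; simpa [sub_eq_add_neg] using hDm i) j φ
    simpa [sub_neg_eq_add] using h
  -- componentwise eigenvalue equation
  have hcomp : ∀ j : ℤ, Dp (π (j - 1) ψ) + Dm (π (j + 1) ψ) = lam • π j ψ := by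
    intro j
    have h := congrArg (π j) hψ
    rw [hπP, hπP, map_add, map_smul, ← hπP, ← hπP, ← hπP, hkeyp, hkeym] at h
    simpa using h
  have hpp : ∀ x : H, Dp (Dp x) = 0 := fun x => congrFun (congrArg DFunLike.coe hp2) x
  have hmm : ∀ x : H, Dm (Dm x) = 0 := fun x => congrFun (congrArg DFunLike.coe hm2) x
  -- identify the components of e k ψ
  have hmemDm : Dm (π k ψ) ∈ S (k - 1) := hDm k ⟨π k ψ, hπmem k ψ, rfl⟩
  have hmemDp : Dp (π (k - 1) ψ) ∈ S k := by
    have := hDp (k - 1) ⟨π (k - 1) ψ, hπmem (k - 1) ψ, rfl⟩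
    simpa using this
  have ha : π (k - 1) (e k ψ) = lam⁻¹ • Dm (π k ψ) := by
    rw [he, hπP, map_smul, map_add, ← hπP, ← hπP,
      hπsame hmemDm, hπne hmemDp (by omega), add_zero]
  have hb : π k (e k ψ) = lam⁻¹ • Dp (π (k - 1) ψ) := by
    rw [he, hπP, map_smul, map_add, ← hπP, ← hπP,
      hπsame hmemDp, hπne hmemDm (by omega), zero_add]
  -- the two key relations from the eigenvalue equation
  have hrel1 : Dp (Dm (π k ψ)) = lam • Dp (π (k - 1) ψ) := by
    have h := congrArg Dp (hcomp (k - 1))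
    have e1 : k - 1 + 1 = k := by ring
    rw [e1, map_add, map_smul, hpp, zero_add] at h
    exact h
  have hrel2 : Dm (Dp (π (k - 1) ψ)) = lam • Dm (π k ψ) := by
    have h := congrArg Dm (hcomp k)
    rw [map_add, map_smul, hmm, add_zero] at h
    exact h
  have h4 : Dp (π (k - 1) (e k ψ)) = lam • π k (e k ψ) := by
    rw [ha, hb, map_smul, hrel1, smul_comm]
  have h5 : Dm (π k (e k ψ)) = lam • π (k - 1) (e k ψ) := by
    rw [ha, hb, map_smul, hrel2, smul_comm]
  have h6 : Dm (π (k - 1) (e k ψ)) = 0 := by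
    rw [ha, map_smul, hmm, smul_zero]
  have h7 : Dp (π k (e k ψ)) = 0 := by
    rw [hb, map_smul, hpp, smul_zero]
  refine ⟨?_, ?_, ?_, h4, h5, h6, h7, ?_, ?_⟩
  · rw [ha]; exact Submodule.smul_mem _ _ hmemDm
  · rw [hb]; exact Submodule.smul_mem _ _ hmemDp
  · rw [ha, hb, he, smul_add]
  · simp only [LinearMap.add_apply, h4, h6, add_zero, map_smul, h5, h7, zero_add,
      smul_smul, ← sq]
  · simp only [LinearMap.add_apply, h5, h7, zero_add, map_smul, h4, h6, add_zero,
      smul_smul, ← sq]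
end

section
/- Suppose additionally that H is a complex inner product space and D₊, D₋ are mutually adjoint: ⟨D₊φ, ψ⟩ = ⟨φ, D₋ψ⟩ for all φ, ψ, and that the grading H = ⊕ H_k is orthogonal. Then for λ ≠ 0, each projection e_k : E^λ → E^λ is selfadjoint, and hence the decomposition E^λ = ⊕_{k=1}^m E^λ_k is orthogonal. -/
open scoped ComplexInnerProductSpace

/-- Proposition 1.5 (i): if `D₊, D₋` are mutually adjoint and the grading is orthogonal,
then for real `λ ≠ 0` each `e_k` is selfadjoint on the eigenspace `E^λ`, and hence the
decomposition `E^λ = ⊕_{k=1}^m E^λ_k` is orthogonal. -/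
theorem stmt9 {H : Type*} [NormedAddCommGroup H] [InnerProductSpace ℂ H] (m : ℕ)
    (S : ℤ → Submodule ℂ H) [DirectSum.Decomposition S]
    (hSzero : ∀ k : ℤ, (k < 0 ∨ (m : ℤ) < k) → S k = ⊥)
    (hSorth : ∀ k l : ℤ, k ≠ l → ∀ x ∈ S k, ∀ y ∈ S l, ⟪x, y⟫ = 0)
    (Dp Dm : H →ₗ[ℂ] H)
    (hDp : ∀ k : ℤ, (S k).map Dp ≤ S (k + 1))
    (hDm : ∀ k : ℤ, (S k).map Dm ≤ S (k - 1))
    (hp2 : Dp ∘ₗ Dp = 0) (hm2 : Dm ∘ₗ Dm = 0)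
    (hadj : ∀ φ χ : H, ⟪Dp φ, χ⟫ = ⟪φ, Dm χ⟫)
    (lam : ℝ) (hlam : lam ≠ 0)
    (π : ℤ → H → H) (hπ : ∀ k φ, π k φ = ((DirectSum.decompose S φ) k : H))
    (e : ℤ → H → H)
    (he : ∀ k φ, e k φ = ((lam : ℂ))⁻¹ • (Dm (π k φ) + Dp (π (k - 1) φ))) :
    (∀ k : ℤ, 1 ≤ k → k ≤ (m : ℤ) →
      ∀ φ ψ : H, Dp φ + Dm φ = (lam : ℂ) • φ → Dp ψ + Dm ψ = (lam : ℂ) • ψ →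
        ⟪e k φ, ψ⟫ = ⟪φ, e k ψ⟫) ∧
    (∀ k l : ℤ, 1 ≤ k → k ≤ (m : ℤ) → 1 ≤ l → l ≤ (m : ℤ) → k ≠ l →
      ∀ φ ψ : H, Dp φ + Dm φ = (lam : ℂ) • φ → Dp ψ + Dm ψ = (lam : ℂ) • ψ →
        ⟪e k φ, e l ψ⟫ = 0) := by
  classical
  have hπmem : ∀ (k : ℤ) (φ : H), π k φ ∈ S k := by
    intro k φ; rw [hπ]; exact ((DirectSum.decompose S φ) k).2
  have horth : ∀ (a : ℤ) (x φ : H), x ∈ S a → ⟪φ, x⟫ = ⟪π a φ, x⟫ := by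
    intro a x φ hx
    conv_lhs => rw [← DirectSum.sum_support_decompose S φ]
    rw [sum_inner, Finset.sum_eq_single a]
    · rw [hπ]
    · intro b _ hba
      exact hSorth b a hba _ ((DirectSum.decompose S φ) b).2 x hx
    · intro ha
      rw [DFinsupp.notMem_support_iff.mp ha]
      simp
  have horth' : ∀ (a : ℤ) (x φ : H), x ∈ S a → ⟪x, φ⟫ = ⟪x, π a φ⟫ := by
    intro a x φ hx
    rw [← inner_conj_symm, horth a x φ hx, inner_conj_symm]
  have hDmadj : ∀ x y : H, ⟪Dm x, y⟫ = ⟪x, Dp y⟫ := by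
    intro x y
    rw [← inner_conj_symm, ← hadj, inner_conj_symm]
  have hmmem : ∀ (k : ℤ) (φ : H), Dm (π k φ) ∈ S (k - 1) := by
    intro k φ; exact hDm k (Submodule.mem_map_of_mem (hπmem k φ))
  have hpmem : ∀ (k : ℤ) (φ : H), Dp (π (k - 1) φ) ∈ S k := by
    intro k φ
    have := hDp (k - 1) (Submodule.mem_map_of_mem (hπmem (k - 1) φ))
    simpa using this
  have hpp : ∀ x : H, Dp (Dp x) = 0 := by
    intro x; have := LinearMap.ext_iff.mp hp2 x; simpa using this
  have hmm : ∀ x : H, Dm (Dm x) = 0 := by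
    intro x; have := LinearMap.ext_iff.mp hm2 x; simpa using this
  have hc : (starRingEnd ℂ) ((lam : ℂ))⁻¹ = ((lam : ℂ))⁻¹ := by
    simp [map_inv₀, Complex.conj_ofReal]
  constructor
  · intro k _ _ φ ψ _ _
    rw [he, he, inner_smul_left, inner_smul_right, hc, inner_add_left, inner_add_right]
    have e1 : ⟪Dm (π k φ), ψ⟫ = ⟪π k φ, Dp (π (k - 1) ψ)⟫ := by
      rw [horth' (k - 1) _ ψ (hmmem k φ), hDmadj]
    have e2 : ⟪Dp (π (k - 1) φ), ψ⟫ = ⟪π (k - 1) φ, Dm (π k ψ)⟫ := by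
      rw [horth' k _ ψ (hpmem k φ), hadj]
    have f1 : ⟪φ, Dm (π k ψ)⟫ = ⟪π (k - 1) φ, Dm (π k ψ)⟫ :=
      horth (k - 1) _ φ (hmmem k ψ)
    have f2 : ⟪φ, Dp (π (k - 1) ψ)⟫ = ⟪π k φ, Dp (π (k - 1) ψ)⟫ :=
      horth k _ φ (hpmem k ψ)
    rw [e1, e2, f1, f2]
    ring
  · intro k l _ _ _ _ hkl φ ψ _ _
    rw [he, he, inner_smul_left, inner_smul_right, inner_add_left, inner_add_right, inner_add_right]
    have t1 : ⟪Dm (π k φ), Dm (π l ψ)⟫ = 0 :=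
      hSorth (k - 1) (l - 1) (by omega) _ (hmmem k φ) _ (hmmem l ψ)
    have t4 : ⟪Dp (π (k - 1) φ), Dp (π (l - 1) ψ)⟫ = 0 :=
      hSorth k l hkl _ (hpmem k φ) _ (hpmem l ψ)
    have t2 : ⟪Dm (π k φ), Dp (π (l - 1) ψ)⟫ = 0 := by
      by_cases h : k - 1 = l
      · rw [hDmadj, hpp]; simp
      · exact hSorth (k - 1) l h _ (hmmem k φ) _ (hpmem l ψ)
    have t3 : ⟪Dp (π (k - 1) φ), Dm (π l ψ)⟫ = 0 := by
      by_cases h : k = l - 1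
      · rw [hadj, hmm]; simp
      · exact hSorth k (l - 1) h _ (hpmem k φ) _ (hmmem l ψ)
    rw [t1, t2, t3, t4]
    ring
end
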